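/- Let n ≥ 1 and let d_0 = d_1 = ⋯ = d_n = 1. Then for every checkpoint set C ⊆ {0,…,n} with 0 ∈ C and n ∈ C, the cost Σ_{i ∈ C} d_i + max over segments of C of the segment's d-sum is at least 2√n. -/

import Mathlib

/-!
Let `0 = c₀ < c₁ < ⋯ < c_a = n` be the checkpoints up to `n`. The gaps `c_{j+1} - c_j` cover
`{0, …, n - 1}`, so `n ≤ a · g` for the largest gap `g`. The cost is at least `(a + 1) + (g - 1)`,
and AM–GM gives `a + g ≥ 2√(a g) ≥ 2√n`.
-/

/-- `h` and `i` are consecutive checkpoints of `C`. -/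
def ConsecPair (C : Finset ℕ) (h i : ℕ) : Prop :=
  h ∈ C ∧ i ∈ C ∧ h < i ∧ ∀ c ∈ C, c ≤ h ∨ i ≤ c

/-- The maximum `d`-sum of a segment of `C` (a maximal block of consecutive
non-checkpoint indices, i.e. the indices strictly between two consecutive
checkpoints); it is `0` when every segment is empty. -/
noncomputable def maxSegSum (d : ℕ → ℝ) (C : Finset ℕ) : ℝ :=
  sSup {x : ℝ | ∃ h i, ConsecPair C h i ∧ x = ∑ k ∈ Finset.Ioo h i, d k}

open Finset

lemma two_mul_sqrt_le_add_of_le_mul {x a b : ℝ} (ha : 0 ≤ a) (hb : 0 ≤ b) (h : x ≤ a * b) :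
    2 * √x ≤ a + b := by
  rw [← le_div_iff₀' two_pos, Real.sqrt_le_iff]
  exact ⟨by positivity, by nlinarith [sq_nonneg (a - b)]⟩

lemma bddAbove_segSums (d : ℕ → ℝ) (C : Finset ℕ) :
    BddAbove {x : ℝ | ∃ h i, ConsecPair C h i ∧ x = ∑ k ∈ Ioo h i, d k} := by
  refine ((C ×ˢ C).image fun p => ∑ k ∈ Ioo p.1 p.2, d k).bddAbove.mono ?_
  rintro x ⟨h, i, hp, rfl⟩
  exact mem_image.mpr ⟨(h, i), mem_product.mpr ⟨hp.1, hp.2.1⟩, rfl⟩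

lemma ConsecPair.sum_le_maxSegSum {d : ℕ → ℝ} {C : Finset ℕ} {h i : ℕ} (hp : ConsecPair C h i) :
    ∑ k ∈ Ioo h i, d k ≤ maxSegSum d C :=
  le_csSup (bddAbove_segSums d C) ⟨h, i, hp, rfl⟩

lemma maxSegSum_nonneg {d : ℕ → ℝ} (hd : ∀ k, 0 ≤ d k) (C : Finset ℕ) : 0 ≤ maxSegSum d C :=
  Real.sSup_nonneg <| by
    rintro x ⟨h, i, -, rfl⟩
    exact sum_nonneg fun k _ => hd k

/-- The checkpoint following `c` in `C`; it is `0` when `C` has no element above `c`. -/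
noncomputable def nextCheckpoint (C : Finset ℕ) (c : ℕ) : ℕ := sInf {x | x ∈ C ∧ c < x}

lemma consecPair_nextCheckpoint {C : Finset ℕ} {c m : ℕ} (hc : c ∈ C) (hm : m ∈ C) (hcm : c < m) :
    ConsecPair C c (nextCheckpoint C c) := by
  have hmem := Nat.sInf_mem (s := {x | x ∈ C ∧ c < x}) ⟨m, hm, hcm⟩
  refine ⟨hc, hmem.1, hmem.2, fun c' hc' => ?_⟩
  by_cases h : c' ≤ c
  · exact Or.inl h
  · exact Or.inr (Nat.sInf_le ⟨hc', by omega⟩)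

lemma exists_mem_Ico_nextCheckpoint {C : Finset ℕ} {n x : ℕ} (h0 : 0 ∈ C) (hn : n ∈ C) (hx : x < n) :
    ∃ c ∈ C, c < n ∧ x ∈ Ico c (nextCheckpoint C c) := by
  have hne : (C.filter (· ≤ x)).Nonempty := ⟨0, mem_filter.mpr ⟨h0, x.zero_le⟩⟩
  obtain ⟨hcC, hcx⟩ := mem_filter.mp ((C.filter (· ≤ x)).max'_mem hne)
  set c := (C.filter (· ≤ x)).max' hne
  obtain ⟨-, hnext, hc_lt, -⟩ := consecPair_nextCheckpoint hcC hn (by omega)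
  refine ⟨c, hcC, by omega, mem_Ico.mpr ⟨hcx, not_le.mp fun hle => ?_⟩⟩
  have := (C.filter (· ≤ x)).le_max' _ (mem_filter.mpr ⟨hnext, hle⟩)
  omega

lemma le_sum_nextCheckpoint_sub {C : Finset ℕ} {n : ℕ} (h0 : 0 ∈ C) (hn : n ∈ C) :
    n ≤ ∑ c ∈ C.filter (· < n), (nextCheckpoint C c - c) := by
  have hcover : range n ⊆ (C.filter (· < n)).biUnion fun c => Ico c (nextCheckpoint C c) := by
    intro x hx
    obtain ⟨c, hc, hcn, hxc⟩ := exists_mem_Ico_nextCheckpoint h0 hn (mem_range.mp hx)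
    exact mem_biUnion.mpr ⟨c, mem_filter.mpr ⟨hc, hcn⟩, hxc⟩
  calc n = #(range n) := (card_range n).symm
    _ ≤ #((C.filter (· < n)).biUnion fun c => Ico c (nextCheckpoint C c)) := card_le_card hcover
    _ ≤ ∑ c ∈ C.filter (· < n), #(Ico c (nextCheckpoint C c)) := card_biUnion_le
    _ = ∑ c ∈ C.filter (· < n), (nextCheckpoint C c - c) := by simp only [Nat.card_Ico]

lemma ConsecPair.sub_le_maxSegSum_add_one {C : Finset ℕ} {h i : ℕ} (hp : ConsecPair C h i) :
    ((i - h : ℕ) : ℝ) ≤ maxSegSum (fun _ => 1) C + 1 := by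
  have hseg := hp.sum_le_maxSegSum (d := fun _ => 1)
  rw [sum_const, Nat.card_Ioo, nsmul_one] at hseg
  rw [show i - h = (i - h - 1) + 1 by have := hp.2.2.1; omega, Nat.cast_succ]
  linarith

theorem sqrt_lower_bound_general (n : ℕ) (C : Finset ℕ) (h0 : 0 ∈ C) (hnC : n ∈ C) :
    2 * Real.sqrt n ≤
      (∑ i ∈ C, (1 : ℝ)) + maxSegSum (fun _ => (1 : ℝ)) C := by
  set M := maxSegSum (fun _ => (1 : ℝ)) C
  set F := C.filter (· < n)
  have hM : 0 ≤ M := maxSegSum_nonneg (fun _ => zero_le_one) C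
  have hcard : (#F : ℝ) + 1 ≤ #C := by
    have : F ⊂ C := filter_ssubset.mpr ⟨n, hnC, lt_irrefl n⟩
    exact_mod_cast card_lt_card this
  have hgaps : (n : ℝ) ≤ #F * (M + 1) := calc
    (n : ℝ) ≤ ∑ c ∈ F, ((nextCheckpoint C c - c : ℕ) : ℝ) := by
      exact_mod_cast le_sum_nextCheckpoint_sub h0 hnC
    _ ≤ ∑ c ∈ F, (M + 1) := sum_le_sum fun c hc => by
      obtain ⟨hcC, hcn⟩ := mem_filter.mp hc
      exact (consecPair_nextCheckpoint hcC hnC hcn).sub_le_maxSegSum_add_one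
    _ = #F * (M + 1) := by rw [sum_const, nsmul_eq_mul]
  calc 2 * √n ≤ #F + (M + 1) := two_mul_sqrt_le_add_of_le_mul (by positivity) (by linarith) hgaps
    _ ≤ (∑ _ ∈ C, (1 : ℝ)) + M := by
      rw [sum_const, nsmul_one]
      linarith

/-- Lower bound of Chen et al.'s `O(√n)` claim: with unit data sizes
`d_0 = ⋯ = d_n = 1`, every checkpoint set `C ⊆ {0,…,n}` with `0 ∈ C` and
`n ∈ C` has cost (checkpoint memory plus maximum segment sum) at least `2√n`. -/
theorem sqrt_lower_bound (n : ℕ) (hn : 1 ≤ n) (C : Finset ℕ)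
    (hC : C ⊆ Finset.range (n + 1)) (h0 : 0 ∈ C) (hnC : n ∈ C) :
    2 * Real.sqrt n ≤
      (∑ i ∈ C, (1 : ℝ)) + maxSegSum (fun _ => (1 : ℝ)) C :=
  sqrt_lower_bound_general n C h0 hnC
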